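/- arXiv:2012.05881 — 2 statements merged into one kernel-verified Lean document; each statement's English description precedes it below -/
import Mathlib

section
/- Let r > 0 and let A, B ∈ ℂ with ‖A‖ = ‖B‖ = r and A ≠ B (two points of the circle of radius r centered at the origin). Let P = A + t·(B − A) and Q = A + s·(B − A) for real numbers t, s (so A, B, P, Q are collinear), and suppose the quadruple is harmonic, i.e. (P − A)·(Q − B) = −(P − B)·(Q − A). Then Re(conj(P)·Q) = r², i.e. Q lies on the polar line of P with respect to the circle. Hence the locus of the harmonic conjugates of P with respect to the intersections of the secants through P with a circle is the polar of P. -/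
/-!
Write `P = A + t (B - A)` and `Q = A + s (B - A)`. The harmonic condition reads
`(2ts - t - s) (B - A)² = 0`. Since `A` and `B` lie on a circle centred at `0`,
`2⟪A, B - A⟫ = -‖B - A‖²`, whence `⟪P, Q⟫ = ‖A‖² + (ts - (t + s)/2) ‖B - A‖²`, and the
correction term vanishes by the harmonic condition. Finally `Re (conj P · Q) = ⟪P, Q⟫`.
-/

open scoped InnerProductSpace

/-- `Q` is the harmonic conjugate of `P` with respect to `A` and `B`. -/
def IsHarmonic {R : Type*} [CommRing R] (A B P Q : R) : Prop :=
  (P - A) * (Q - B) = -((P - B) * (Q - A))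

theorem IsHarmonic.mul_sq_eq_zero {R : Type*} [CommRing R] {A B t s : R}
    (h : IsHarmonic A B (A + t * (B - A)) (A + s * (B - A))) :
    (2 * t * s - t - s) * (B - A) ^ 2 = 0 := by
  unfold IsHarmonic at h
  linear_combination h

theorem inner_add_smul_sub_add_smul_sub_of_norm_eq {E : Type*} [NormedAddCommGroup E]
    [InnerProductSpace ℝ E] {A B : E} (h : ‖A‖ = ‖B‖) (t s : ℝ) :
    ⟪A + t • (B - A), A + s • (B - A)⟫_ℝ =
      ‖A‖ ^ 2 + (t * s - (t + s) / 2) * ‖B - A‖ ^ 2 := by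
  have hchord : 2 * ⟪A, B - A⟫_ℝ = -‖B - A‖ ^ 2 := by
    have := norm_add_sq_real A (B - A)
    rw [add_sub_cancel, ← h] at this
    linarith
  simp only [inner_add_left, inner_add_right, real_inner_smul_left, real_inner_smul_right,
    real_inner_self_eq_norm_sq, real_inner_comm A (B - A)]
  linear_combination (t + s) / 2 * hchord

theorem harmonic_conjugate_on_polar_general (r : ℝ) (A B : ℂ)
    (hA : ‖A‖ = r) (hB : ‖B‖ = r) (t s : ℝ)
    (P Q : ℂ) (hP : P = A + (t : ℂ) * (B - A)) (hQ : Q = A + (s : ℂ) * (B - A))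
    (hharm : (P - A) * (Q - B) = -((P - B) * (Q - A))) :
    ((starRingEnd ℂ) P * Q).re = r ^ 2 := by
  subst hP hQ
  have hparam : (2 * t * s - t - s) * ‖B - A‖ ^ 2 = 0 := by
    rcases mul_eq_zero.mp (IsHarmonic.mul_sq_eq_zero hharm) with hcoef | hBA
    · rw [show 2 * t * s - t - s = 0 by exact_mod_cast hcoef, zero_mul]
    · simp [pow_eq_zero_iff two_ne_zero |>.mp hBA]
  have hinner := inner_add_smul_sub_add_smul_sub_of_norm_eq (hA.trans hB.symm) t s
  simp only [Complex.real_smul, Complex.inner, hA] at hinner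
  rw [mul_comm, hinner]
  linear_combination hparam / 2

theorem harmonic_conjugate_on_polar (r : ℝ) (hr : 0 < r) (A B : ℂ)
    (hA : ‖A‖ = r) (hB : ‖B‖ = r) (hAB : A ≠ B) (t s : ℝ)
    (P Q : ℂ) (hP : P = A + (t : ℂ) * (B - A)) (hQ : Q = A + (s : ℂ) * (B - A))
    (hharm : (P - A) * (Q - B) = -((P - B) * (Q - A))) :
    ((starRingEnd ℂ) P * Q).re = r ^ 2 :=
  harmonic_conjugate_on_polar_general r A B hA hB t s P Q hP hQ hharm
end

section
/- Let K be a field and let f ∈ K[X, Y, Z] be a nonzero polynomial, homogeneous of degree n, and let t = n − deg_X(f), where deg_X(f) is the highest power of X occurring in f (t is the multiplicity of the plane curve f = 0 at the coordinate point (1 : 0 : 0)). Then X^t divides σ(f) = f(Y·Z, X·Z, X·Y) but X^{t+1} does not divide σ(f). Hence, subtracting the analogous contributions of the three coordinate points, the strict transform under the standard quadratic Cremona transformation of a curve of degree n with multiplicities t_A, t_B, t_C at the three fundamental points has degree 2n − t_A − t_B − t_C. -/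
/-!
On monomials the Cremona substitution acts through the injective exponent map
`(a, b, c) ↦ (b + c, a + c, a + b)`, so `σ(f)` has the same coefficients as `f`, moved to new
exponents. For a monomial of degree `n` the new exponent of `X` is `n - a`, hence the largest power
of `X` dividing `σ(f)` is `X ^ (n - max a)`, the maximum being `deg_X f`.
-/

open MvPolynomial

/-- The standard quadratic Cremona substitution `X ↦ Y·Z, Y ↦ X·Z, Z ↦ X·Y`. -/
noncomputable def cremona {K : Type*} [Field K]
    (f : MvPolynomial (Fin 3) K) : MvPolynomial (Fin 3) K :=
  aeval ![X 1 * X 2, X 0 * X 2, X 0 * X 1] f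

namespace MvPolynomial

variable {σ R : Type*} [CommSemiring R]

theorem monomial_one_dvd_iff_forall_le {i : σ →₀ ℕ} {p : MvPolynomial σ R} :
    monomial i (1 : R) ∣ p ↔ ∀ s ∈ p.support, i ≤ s := by
  classical
  rw [monomial_one_dvd_iff_modMonomial_eq_zero, MvPolynomial.ext_iff]
  refine forall_congr' fun s => ?_
  by_cases h : i ≤ s
  · simp [h]
  · simp [coeff_modMonomial_of_not_le _ h, h]

theorem X_pow_dvd_iff_forall_le {i : σ} {k : ℕ} {p : MvPolynomial σ R} :
    X i ^ k ∣ p ↔ ∀ s ∈ p.support, k ≤ s i := by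
  simp only [X_pow_eq_monomial, monomial_one_dvd_iff_forall_le, Finsupp.single_le_iff]

theorem forall_le_sub_iff_le_sub_degreeOf {p : MvPolynomial σ R} (hp : p ≠ 0) (i : σ)
    (n k : ℕ) : (∀ s ∈ p.support, k ≤ n - s i) ↔ k ≤ n - p.degreeOf i := by
  constructor
  · intro h
    obtain ⟨s, hs, hsup⟩ :=
      Finset.exists_mem_eq_sup p.support (support_nonempty.mpr hp) (· i)
    rw [degreeOf_eq_sup, hsup]
    exact h s hs
  · intro h s hs
    have := monomial_le_degreeOf i hs
    omega

end MvPolynomial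

noncomputable def cremonaExponent (s : Fin 3 →₀ ℕ) : Fin 3 →₀ ℕ :=
  Finsupp.equivFunOnFinite.symm ![s 1 + s 2, s 0 + s 2, s 0 + s 1]

theorem cremonaExponent_injective : Function.Injective cremonaExponent := by
  intro s t h
  have h0 := DFunLike.congr_fun h 0
  have h1 := DFunLike.congr_fun h 1
  have h2 := DFunLike.congr_fun h 2
  simp [cremonaExponent] at h0 h1 h2
  ext i
  fin_cases i <;> simp <;> omega

theorem cremonaExponent_zero_of_degree_eq {s : Fin 3 →₀ ℕ} {n : ℕ} (h : s.degree = n) :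
    cremonaExponent s 0 = n - s 0 := by
  rw [Finsupp.degree_eq_sum, Fin.sum_univ_three] at h
  simp [cremonaExponent]
  omega

section Cremona

variable {K : Type*} [Field K]

theorem cremona_monomial (s : Fin 3 →₀ ℕ) (c : K) :
    cremona (monomial s c) = monomial (cremonaExponent s) c := by
  rw [cremona, aeval_monomial, monomial_eq, Finsupp.prod_pow, Finsupp.prod_pow,
    Fin.prod_univ_three, Fin.prod_univ_three]
  simp only [cremonaExponent, Finsupp.equivFunOnFinite_symm_apply_apply, Matrix.cons_val_zero,
    Matrix.cons_val_one, Matrix.cons_val_two, Matrix.head_cons, Matrix.tail_cons, algebraMap_eq]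
  ring

theorem cremona_eq_mapDomain (f : MvPolynomial (Fin 3) K) :
    cremona f = AddMonoidAlgebra.mapDomain cremonaExponent f := by
  induction f using MvPolynomial.induction_on' with
  | monomial s c => exact (cremona_monomial s c).trans AddMonoidAlgebra.mapDomain_single.symm
  | add p q hp hq =>
    rw [cremona, map_add, ← cremona, ← cremona, hp, hq, AddMonoidAlgebra.mapDomain_add]

theorem support_cremona (f : MvPolynomial (Fin 3) K) :
    (cremona f).support = f.support.image cremonaExponent := by
  classical
  rw [cremona_eq_mapDomain]
  exact Finsupp.mapDomain_support_of_injective cremonaExponent_injective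
    (AddMonoidAlgebra.coeff f)

theorem X_zero_pow_dvd_cremona_iff {n : ℕ} {f : MvPolynomial (Fin 3) K} (hf0 : f ≠ 0)
    (hf : f.IsHomogeneous n) (k : ℕ) :
    X 0 ^ k ∣ cremona f ↔ k ≤ n - f.degreeOf 0 := by
  rw [X_pow_dvd_iff_forall_le, support_cremona, Finset.forall_mem_image,
    ← forall_le_sub_iff_le_sub_degreeOf hf0]
  refine forall₂_congr fun s hs => ?_
  have hdeg : s.degree = n := by
    rw [Finsupp.degree_eq_weight_one]
    exact hf (mem_support_iff.mp hs)
  rw [cremonaExponent_zero_of_degree_eq hdeg]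

end Cremona

theorem cremona_strict_transform_multiplicity {K : Type*} [Field K] (n : ℕ)
    (f : MvPolynomial (Fin 3) K) (hf0 : f ≠ 0) (hf : f.IsHomogeneous n) :
    X 0 ^ (n - f.degreeOf 0) ∣ cremona f ∧
      ¬ X 0 ^ (n - f.degreeOf 0 + 1) ∣ cremona f := by
  simp only [X_zero_pow_dvd_cremona_iff hf0 hf]
  omega
end
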